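/- arXiv:0812.0707 — 3 statements merged into one kernel-verified Lean document; each statement's English description precedes it below -/
import Mathlib

section
/- If (V,·) is an associative algebra such that the ternary operation m(x1,x2,x3) = x1·x2·x3 defines a partially associative ternary algebra, then m(x1,x2,m(x3,x4,x5)) = 0 for all xi; in particular if V is unital with nonzero identity, m is not partially associative. -/
/-- Partial associativity of the ternary product `m(x,y,z) = x*y*z` on a ring `V`. -/
def PartAssocTriple (V : Type*) [Ring V] : Prop :=
  ∀ x1 x2 x3 x4 x5 : V,
    (x1 * x2 * x3) * x4 * x5 + x1 * (x2 * x3 * x4) * x5 + x1 * x2 * (x3 * x4 * x5) = 0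

theorem stmt4 {K V : Type*} [Field K] [CharZero K] [Ring V] [Algebra K V] :
    (PartAssocTriple V → ∀ x1 x2 x3 x4 x5 : V, x1 * x2 * (x3 * x4 * x5) = 0) ∧
    ((1 : V) ≠ 0 → ¬ PartAssocTriple V) := by
  have key : PartAssocTriple V → ∀ x1 x2 x3 x4 x5 : V, x1 * x2 * (x3 * x4 * x5) = 0 := by
    intro h x1 x2 x3 x4 x5
    have h1 := h x1 x2 x3 x4 x5
    set p := x1 * x2 * (x3 * x4 * x5) with hp
    have h2 : p + p + p = 0 := by
      have e1 : (x1 * x2 * x3) * x4 * x5 = p := by rw [hp]; simp only [mul_assoc]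
      have e2 : x1 * (x2 * x3 * x4) * x5 = p := by rw [hp]; simp only [mul_assoc]
      rw [e1, e2] at h1; exact h1
    have h3 : (3 : K) • p = 0 := by
      rw [show ((3 : K)) = ((3 : ℕ) : K) by norm_num, Nat.cast_smul_eq_nsmul,
        succ_nsmul, two_nsmul]
      exact h2
    rcases smul_eq_zero.mp h3 with h | h
    · exact absurd h (by norm_num)
    · exact h
  refine ⟨key, fun h1 hPA => ?_⟩
  have := key hPA 1 1 1 1 1
  simp at this
  exact h1 this
end

section
/- The cross product of three vectors in R^4, defined by [x1,x2,x3] = the formal determinant whose rows are the coordinates of x1,x2,x3 and the standard basis vectors e1,e2,e3,e4, makes R^4 into a ternary Nambu-Lie algebra: the bracket is skew-symmetric and satisfies the fundamental identity [x1,x2,[x3,x4,x5]] = [[x1,x2,x3],x4,x5] + [x3,[x1,x2,x4],x5] + [x3,x4,[x1,x2,x5]]. -/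
/-!
The bracket is characterised by `⟪[x, y, z], w⟫ = det (x, y, z, w)`, so its skew-symmetry is the
alternation of the determinant. The same identity makes `u ↦ [x, y, u]` a skew-symmetric matrix.
By Jacobi's formula `∑ᵢ det (v₁, …, A vᵢ, …, v₄) = tr A · det (v₁, …, v₄)`, every
skew-symmetric (hence traceless) `A` acts as a derivation of the bracket; taking
`A = [x₁, x₂, ·]` gives the fundamental identity.
-/

/-- The generalized cross product of three vectors in `ℝ⁴`: the vector whose `i`-th
coordinate is the determinant of the matrix with rows `x, y, z` and the `i`-th standard
basis vector, i.e. the vector characterized by `⟨[x,y,z], w⟩ = det(x,y,z,w)`. -/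
noncomputable def cross4 (x y z : Fin 4 → ℝ) : Fin 4 → ℝ :=
  fun i => Matrix.det (Matrix.of ![x, y, z, fun j => if j = i then (1 : ℝ) else 0])

namespace Matrix

variable {n R : Type*} [Fintype n] [DecidableEq n] [CommRing R]

theorem sum_det_updateRow (M B : Matrix n n R) :
    ∑ i, (M.updateRow i (B i)).det = trace (adjugate Mᵀ * Bᵀ) := by
  simp only [← cramer_transpose_apply, cramer_eq_adjugate_mulVec, trace, diag, mul_apply,
    mulVec, dotProduct, transpose_apply]

theorem sum_det_updateRow_mulVec (M A : Matrix n n R) :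
    ∑ i, (M.updateRow i (A *ᵥ M i)).det = A.trace * M.det := by
  have hrows : ∀ i, A *ᵥ M i = (M * Aᵀ) i := fun i => by
    ext j
    simp [mulVec, dotProduct, mul_apply, mul_comm]
  simp only [hrows, sum_det_updateRow, transpose_mul, transpose_transpose, ← Matrix.mul_assoc]
  rw [trace_mul_comm, ← Matrix.mul_assoc, mul_adjugate, det_transpose, smul_mul_assoc, one_mul,
    trace_smul, smul_eq_mul, mul_comm]

theorem det_of_comp_swap (v : n → n → R) {i j : n} (hij : i ≠ j) :
    (of (v ∘ Equiv.swap i j)).det = -(of v).det := by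
  rw [show of (v ∘ Equiv.swap i j) = (of v).submatrix (Equiv.swap i j) id from rfl, det_permute,
    Equiv.Perm.sign_swap hij]
  simp

theorem det_of_four_mulVec_sum (A : Matrix (Fin 4) (Fin 4) R) (x y z w : Fin 4 → R) :
    (of ![A *ᵥ x, y, z, w]).det + (of ![x, A *ᵥ y, z, w]).det + (of ![x, y, A *ᵥ z, w]).det +
      (of ![x, y, z, A *ᵥ w]).det = A.trace * (of ![x, y, z, w]).det := by
  have hupdate : ![A *ᵥ x, y, z, w] = Function.update ![x, y, z, w] 0 (A *ᵥ x) ∧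
      ![x, A *ᵥ y, z, w] = Function.update ![x, y, z, w] 1 (A *ᵥ y) ∧
      ![x, y, A *ᵥ z, w] = Function.update ![x, y, z, w] 2 (A *ᵥ z) ∧
      ![x, y, z, A *ᵥ w] = Function.update ![x, y, z, w] 3 (A *ᵥ w) := by
    refine ⟨?_, ?_, ?_, ?_⟩ <;> (funext i; fin_cases i <;> rfl)
  rw [hupdate.1, hupdate.2.1, hupdate.2.2.1, hupdate.2.2.2, ← sum_det_updateRow_mulVec,
    Fin.sum_univ_four]
  rfl

end Matrix

open Matrix

theorem cross4_apply_eq_adjugate (x y z w : Fin 4 → ℝ) (i : Fin 4) :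
    cross4 x y z i = adjugate (of ![x, y, z, w]) i 3 := by
  have hrow : ![x, y, z, fun j => if j = i then (1 : ℝ) else 0] =
      Function.update ![x, y, z, w] 3 (Pi.single i 1) := by
    funext a b
    fin_cases a <;> simp [Pi.single_apply]
  rw [adjugate_apply, cross4, hrow]
  rfl

theorem cross4_dotProduct (x y z w : Fin 4 → ℝ) :
    cross4 x y z ⬝ᵥ w = (of ![x, y, z, w]).det :=
  calc cross4 x y z ⬝ᵥ w = (adjugate (of ![x, y, z, w])ᵀ *ᵥ w) 3 := by
        simp only [dotProduct, mulVec, cross4_apply_eq_adjugate x y z w, ← adjugate_transpose,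
          transpose_apply, mul_comm]
    _ = ((of ![x, y, z, w]).updateRow 3 w).det := by
        rw [← cramer_eq_adjugate_mulVec, cramer_transpose_apply]
    _ = (of ![x, y, z, w]).det := congrArg det (updateRow_eq_self _ 3)

theorem cross4_anticomm_left (x y z : Fin 4 → ℝ) : cross4 x y z = -cross4 y x z := by
  refine dotProduct_eq _ _ fun w => ?_
  rw [neg_dotProduct, cross4_dotProduct, cross4_dotProduct,
    ← det_of_comp_swap _ (show (0 : Fin 4) ≠ 1 by decide)]
  congr 2
  ext i
  fin_cases i <;> rfl

theorem cross4_anticomm_right (x y z : Fin 4 → ℝ) : cross4 x y z = -cross4 x z y := by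
  refine dotProduct_eq _ _ fun w => ?_
  rw [neg_dotProduct, cross4_dotProduct, cross4_dotProduct,
    ← det_of_comp_swap _ (show (1 : Fin 4) ≠ 2 by decide)]
  congr 2
  ext i
  fin_cases i <;> rfl

theorem cross4_dotProduct_anticomm (x y u v : Fin 4 → ℝ) :
    cross4 x y u ⬝ᵥ v = -(cross4 x y v ⬝ᵥ u) := by
  rw [cross4_dotProduct, cross4_dotProduct,
    ← det_of_comp_swap _ (show (2 : Fin 4) ≠ 3 by decide)]
  congr 2
  ext i
  fin_cases i <;> rfl

theorem mulVec_cross4_of_transpose_eq_neg (A : Matrix (Fin 4) (Fin 4) ℝ) (hA : Aᵀ = -A)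
    (x y z : Fin 4 → ℝ) :
    A *ᵥ cross4 x y z =
      cross4 (A *ᵥ x) y z + cross4 x (A *ᵥ y) z + cross4 x y (A *ᵥ z) := by
  have htrace : A.trace = 0 := by
    have := trace_transpose A
    rw [hA, trace_neg] at this
    linarith
  refine dotProduct_eq _ _ fun w => ?_
  have hJacobi := det_of_four_mulVec_sum A x y z w
  rw [htrace, zero_mul] at hJacobi
  rw [add_dotProduct, add_dotProduct, cross4_dotProduct, cross4_dotProduct, cross4_dotProduct,
    ← vecMul_transpose, ← dotProduct_mulVec, hA, neg_mulVec, dotProduct_neg, cross4_dotProduct]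
  linarith

noncomputable def crossMatrix (x y : Fin 4 → ℝ) : Matrix (Fin 4) (Fin 4) ℝ :=
  of fun i j => cross4 x y (Pi.single j 1) i

theorem crossMatrix_transpose (x y : Fin 4 → ℝ) : (crossMatrix x y)ᵀ = -crossMatrix x y := by
  ext i j
  simp only [crossMatrix, transpose_apply, Matrix.neg_apply, of_apply]
  rw [← dotProduct_single_one (cross4 x y _) j, cross4_dotProduct_anticomm, dotProduct_single_one]

theorem crossMatrix_mulVec (x y u : Fin 4 → ℝ) : crossMatrix x y *ᵥ u = cross4 x y u := by
  ext i
  calc (crossMatrix x y *ᵥ u) i = -(((crossMatrix x y)ᵀ *ᵥ u) i) := by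
        rw [crossMatrix_transpose, neg_mulVec, Pi.neg_apply, neg_neg]
    _ = -(cross4 x y (Pi.single i 1) ⬝ᵥ u) := rfl
    _ = cross4 x y u i := by rw [← cross4_dotProduct_anticomm, dotProduct_single_one]

theorem stmt7 :
    (∀ x y z : Fin 4 → ℝ, cross4 x y z = - cross4 y x z) ∧
    (∀ x y z : Fin 4 → ℝ, cross4 x y z = - cross4 x z y) ∧
    (∀ x1 x2 x3 x4 x5 : Fin 4 → ℝ,
      cross4 x1 x2 (cross4 x3 x4 x5) =
        cross4 (cross4 x1 x2 x3) x4 x5 + cross4 x3 (cross4 x1 x2 x4) x5 +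
          cross4 x3 x4 (cross4 x1 x2 x5)) := by
  refine ⟨cross4_anticomm_left, cross4_anticomm_right, fun x1 x2 x3 x4 x5 => ?_⟩
  simp only [← crossMatrix_mulVec x1 x2]
  exact mulVec_cross4_of_transpose_eq_neg _ (crossMatrix_transpose x1 x2) x3 x4 x5
end

section
/- For a partially associative ternary algebra (V,m), with δ¹f(x1,x2,x3) = f(m(x1,x2,x3)) − m(f(x1),x2,x3) − m(x1,f(x2),x3) − m(x1,x2,f(x3)) and δ²φ = φ∘m + m∘φ (where (φ∘ψ)(x1,...,x5) = ∑_{i=0}^{2} φ(x1,...,m applied at positions i+1..i+3,...,x5)), one has δ² ∘ δ¹ = 0. -/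
/-- The 1-coboundary operator of a partially associative ternary algebra. -/
def pDelta1 {K V : Type*} [Field K] [AddCommGroup V] [Module K V]
    (m : V →ₗ[K] V →ₗ[K] V →ₗ[K] V) (f : V →ₗ[K] V) (x1 x2 x3 : V) : V :=
  f (m x1 x2 x3) - m (f x1) x2 x3 - m x1 (f x2) x3 - m x1 x2 (f x3)

/-- The 2-coboundary operator `δ²φ = φ∘m + m∘φ` of a partially associative ternary algebra. -/
def pDelta2 {K V : Type*} [Field K] [AddCommGroup V] [Module K V]
    (m : V →ₗ[K] V →ₗ[K] V →ₗ[K] V) (φ : V → V → V → V) (x1 x2 x3 x4 x5 : V) : V :=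
  m (φ x1 x2 x3) x4 x5 + m x1 (φ x2 x3 x4) x5 + m x1 x2 (φ x3 x4 x5)
    + φ (m x1 x2 x3) x4 x5 + φ x1 (m x2 x3 x4) x5 + φ x1 x2 (m x3 x4 x5)

theorem stmt8 {K V : Type*} [Field K] [AddCommGroup V] [Module K V]
    (m : V →ₗ[K] V →ₗ[K] V →ₗ[K] V)
    (hpa : ∀ x1 x2 x3 x4 x5 : V,
      m (m x1 x2 x3) x4 x5 + m x1 (m x2 x3 x4) x5 + m x1 x2 (m x3 x4 x5) = 0)
    (f : V →ₗ[K] V) :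
    ∀ x1 x2 x3 x4 x5 : V, pDelta2 m (pDelta1 m f) x1 x2 x3 x4 x5 = 0 := by
  intro x1 x2 x3 x4 x5
  have h0 := congrArg f (hpa x1 x2 x3 x4 x5)
  have h1 := hpa (f x1) x2 x3 x4 x5
  have h2 := hpa x1 (f x2) x3 x4 x5
  have h3 := hpa x1 x2 (f x3) x4 x5
  have h4 := hpa x1 x2 x3 (f x4) x5
  have h5 := hpa x1 x2 x3 x4 (f x5)
  simp only [map_add, map_zero] at h0
  simp only [pDelta2, pDelta1, map_sub, map_add, LinearMap.sub_apply, LinearMap.add_apply]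
  linear_combination (norm := abel) h0 - h1 - h2 - h3 - h4 - h5
end
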